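/- (Pyatetskii-Shapiro criterion, limsup form used in the paper) If there exists a constant c > 0 such that for every finite word w ∈ A*, limsup_{n→∞} #{0 ≤ i ≤ n-1 : T^i x ∈ C_w}/n ≤ c·(#A)^{-|w|}, then x is normal. -/

import Mathlib

/-!
Fix `k` and read `x` through its length-`k` blocks `y j = x j ⋯ x (j + k - 1)`, a sequence over
the alphabet `W = A^k`. For `g ∈ W^m`, the number of coordinates of `g` equal to a given `v` is a
binomial count with mean `m / |W|` and variance at most `m / |W|`, so by Chebyshev at most
`|W|^m / (ε² m)` tuples `g` contain `v` more than `m (1/|W| + ε)` times. Sliding a window of `m`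
blocks at offsets `0, k, …, (m-1)k` along `x` and averaging the occurrences of `v` over its `m`
slots bounds the upper frequency of `v` by `1/|W| + ε` plus the total frequency of those bad
windows, which by hypothesis is at most `c / (ε² m)`. Letting `m → ∞`, every `v ∈ W` has upper
frequency at most `1/|W|`; as the frequencies of the `|W|` words of length `k` sum to `1`, each of
them converges to `1/|W|`.
-/

open Filter Topology

def pref {A : Type*} (x : ℕ → A) (n : ℕ) : List A := (List.range n).map x

/-- Number of occurrences of `u` in `w` (as a factor). -/
noncomputable def occ {A : Type*} (w u : List A) : ℕ :=
  {i : ℕ | i + u.length ≤ w.length ∧ (w.drop i).take u.length = u}.ncard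

/-- A sequence `x ∈ A^ℕ` is normal if every finite word occurs in its prefixes with
limiting frequency `(#A)^{-|w|}`. -/
def IsNormal {A : Type*} [Fintype A] (x : ℕ → A) : Prop :=
  ∀ w : List A,
    Tendsto (fun n => (occ (pref x n) w : ℝ) / n) atTop
      (nhds (((Fintype.card A : ℝ) ^ w.length)⁻¹))

open Finset

namespace PyatetskiiShapiro

theorem tendsto_of_eventually_le_of_sum_eq {α κ : Type*} [Fintype κ] {l : Filter α}
    {f : κ → α → ℝ} {p : κ → ℝ} (hsum : ∀ᶠ a in l, ∑ i, f i a = ∑ i, p i)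
    (hle : ∀ i, ∀ ε > 0, ∀ᶠ a in l, f i a ≤ p i + ε) (i : κ) :
    Tendsto (f i) l (𝓝 (p i)) := by
  refine tendsto_order.2 ⟨fun b hb => ?_, fun b hb => ?_⟩
  · set ε := (p i - b) / (Fintype.card κ + 1)
    have hε : 0 < ε := div_pos (sub_pos.2 hb) (by positivity)
    have hcard : Fintype.card κ * ε < p i - b := by
      rw [mul_div_assoc', div_lt_iff₀ (by positivity)]
      nlinarith
    filter_upwards [hsum, eventually_all.2 fun j => hle j ε hε] with a hsa hla
    -- the slacks `p j + ε - f j a` are nonnegative and sum to `card κ * ε`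
    have hslack : p i + ε - f i a ≤ ∑ j, (p j + ε - f j a) :=
      single_le_sum (f := fun j => p j + ε - f j a) (fun j _ => by linarith [hla j]) (mem_univ i)
    rw [sum_sub_distrib, sum_add_distrib, hsa, sum_const, card_univ, nsmul_eq_mul] at hslack
    linarith
  · filter_upwards [hle i ((b - p i) / 2) (by linarith)] with a ha
    linarith

section Count

variable (p : ℕ → Prop) [DecidablePred p]

theorem count_le_count_shift_add (t n : ℕ) :
    Nat.count p n ≤ Nat.count (fun i => p (i + t)) n + t :=
  calc Nat.count p n ≤ Nat.count p (n + t) := Nat.count_monotone p (Nat.le_add_right n t)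
    _ = Nat.count (fun i => p (i + t)) n + Nat.count p t := Nat.count_add' p n t
    _ ≤ _ := Nat.add_le_add_left (Nat.count_le p) _

theorem count_le_count_add_tsub (a b : ℕ) : Nat.count p b ≤ Nat.count p a + (b - a) := by
  rcases le_total a b with hab | hba
  · calc Nat.count p b = Nat.count p (a + (b - a)) := by rw [Nat.add_sub_cancel' hab]
      _ = _ := Nat.count_add p a (b - a)
      _ ≤ _ := Nat.add_le_add_left (Nat.count_le _) _
  · exact (Nat.count_monotone p hba).trans (Nat.le_add_right _ _)

theorem eventually_count_le_mul_of_limsup_le {a b : ℝ}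
    (h : limsup (fun n => (Nat.count p n : ℝ) / n) atTop ≤ a) (hab : a < b) :
    ∀ᶠ n in atTop, (Nat.count p n : ℝ) ≤ b * n := by
  have hbdd : IsBoundedUnder (· ≤ ·) atTop (fun n => (Nat.count p n : ℝ) / n) :=
    isBoundedUnder_of ⟨1, fun n =>
      div_le_one_of_le₀ (by exact_mod_cast Nat.count_le p) n.cast_nonneg⟩
  filter_upwards [eventually_lt_of_limsup_lt (h.trans_lt hab) hbdd, eventually_gt_atTop 0]
    with n hlt hn
  exact ((div_lt_iff₀ (by positivity)).1 hlt).le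

theorem tendsto_count_tsub_div (k : ℕ) {a : ℝ}
    (h : Tendsto (fun n => (Nat.count p n : ℝ) / n) atTop (𝓝 a)) :
    Tendsto (fun n => (Nat.count p (n + 1 - k) : ℝ) / n) atTop (𝓝 a) := by
  refine h.congr_dist (squeeze_zero (fun _ => dist_nonneg) (fun n => ?_)
    (tendsto_const_div_atTop_nhds_zero_nat ((k : ℝ) + 1)))
  have h₁ : (Nat.count p n : ℝ) ≤ Nat.count p (n + 1 - k) + (k + 1) := by
    exact_mod_cast (count_le_count_add_tsub p (n + 1 - k) n).trans (by omega)
  have h₂ : (Nat.count p (n + 1 - k) : ℝ) ≤ Nat.count p n + (k + 1) := by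
    exact_mod_cast (count_le_count_add_tsub p n (n + 1 - k)).trans (by omega)
  rw [Real.dist_eq, ← sub_div, abs_div, Nat.abs_cast]
  gcongr
  exact abs_sub_le_iff.2 ⟨by linarith, by linarith⟩

end Count

theorem sum_range_comp_eq_sum_count_smul {β M : Type*} [Fintype β] [DecidableEq β]
    [AddCommMonoid M] (Y : ℕ → β) (F : β → M) (n : ℕ) :
    ∑ j ∈ range n, F (Y j) = ∑ b, Nat.count (fun j => Y j = b) n • F b := by
  rw [← sum_fiberwise (range n) Y]
  refine sum_congr rfl fun b _ => ?_
  rw [Nat.count_eq_card_filter_range, ← sum_const]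
  exact sum_congr rfl fun j hj => by rw [(mem_filter.1 hj).2]

section Binomial

variable {ι W : Type*} [Fintype ι] [DecidableEq ι] [Fintype W] [DecidableEq W]

def hitCount (v : W) (g : ι → W) : ℕ := #{s | g s = v}

omit [DecidableEq ι] [Fintype W] in
theorem cast_hitCount (v : W) (g : ι → W) :
    (hitCount v g : ℝ) = ∑ s, if g s = v then 1 else 0 := by
  rw [hitCount, sum_boole]

theorem card_filter_forall_mem_mul_pow (v : W) (S : Finset ι) :
    #{g : ι → W | ∀ s ∈ S, g s = v} * Fintype.card W ^ #S
      = Fintype.card W ^ Fintype.card ι := by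
  have hpi : ({g : ι → W | ∀ s ∈ S, g s = v} : Finset _)
      = Fintype.piFinset fun s => if s ∈ S then {v} else univ := by
    ext g
    simp only [mem_filter, mem_univ, true_and, Fintype.mem_piFinset]
    refine forall_congr' fun s => ?_
    split_ifs <;> simp [*]
  have hcard : ∀ s, #(if s ∈ S then {v} else (univ : Finset W))
      = if s ∈ Sᶜ then Fintype.card W else 1 := by
    intro s
    split_ifs <;> simp_all
  rw [hpi, Fintype.card_piFinset, prod_congr rfl fun s _ => hcard s, Fintype.prod_ite_mem,
    prod_const, ← pow_add, card_compl_add_card]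

theorem cast_card_filter_forall_mem (v : W) (S : Finset ι) :
    (#{g : ι → W | ∀ s ∈ S, g s = v} : ℝ)
      = (Fintype.card W : ℝ) ^ Fintype.card ι / (Fintype.card W : ℝ) ^ #S := by
  have hW : (Fintype.card W : ℝ) ≠ 0 := by
    have : Nonempty W := ⟨v⟩
    positivity
  rw [eq_div_iff (pow_ne_zero _ hW)]
  exact_mod_cast card_filter_forall_mem_mul_pow v S

theorem sum_hitCount (v : W) :
    ∑ g : ι → W, (hitCount v g : ℝ)
      = Fintype.card ι * ((Fintype.card W : ℝ) ^ Fintype.card ι / Fintype.card W) := by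
  have hone : ∀ s : ι, (#{g : ι → W | g s = v} : ℝ)
      = (Fintype.card W : ℝ) ^ Fintype.card ι / Fintype.card W := fun s => by
    simpa using cast_card_filter_forall_mem v {s}
  simp_rw [cast_hitCount]
  rw [sum_comm]
  simp_rw [sum_boole, hone, sum_const, card_univ, nsmul_eq_mul]

theorem sum_hitCount_sq (v : W) :
    ∑ g : ι → W, (hitCount v g : ℝ) ^ 2
      = Fintype.card ι * ((Fintype.card W : ℝ) ^ Fintype.card ι / Fintype.card W)
        + Fintype.card ι * (Fintype.card ι - 1)
          * ((Fintype.card W : ℝ) ^ Fintype.card ι / (Fintype.card W) ^ 2) := by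
  have hpairs : ∑ g : ι → W, (hitCount v g : ℝ) ^ 2 = ∑ s : ι, ∑ s' : ι,
      (Fintype.card W : ℝ) ^ Fintype.card ι / (Fintype.card W : ℝ) ^ #{s, s'} := by
    simp_rw [cast_hitCount, sq, sum_mul_sum, ite_zero_mul_ite_zero, one_mul]
    rw [sum_comm]
    simp_rw [sum_comm (γ := ι → W)]
    simp_rw [sum_boole, ← cast_card_filter_forall_mem v, forall_mem_insert, mem_singleton,
      forall_eq]
  have hpair : ∀ s s' : ι,
      (Fintype.card W : ℝ) ^ Fintype.card ι / (Fintype.card W : ℝ) ^ #{s, s'}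
        = (Fintype.card W : ℝ) ^ Fintype.card ι / (Fintype.card W) ^ 2
          + if s = s' then (Fintype.card W : ℝ) ^ Fintype.card ι / Fintype.card W
            - (Fintype.card W : ℝ) ^ Fintype.card ι / (Fintype.card W) ^ 2 else 0 := by
    intro s s'
    split_ifs with h
    · simp [h]
    · rw [card_pair h, add_zero]
  simp only [hpairs, hpair, sum_add_distrib, sum_ite_eq, mem_univ, if_true, sum_const,
    card_univ, nsmul_eq_mul]
  ring

theorem sum_hitCount_sub_sq_le (v : W) :
    ∑ g : ι → W, ((hitCount v g : ℝ) - Fintype.card ι / Fintype.card W) ^ 2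
      ≤ Fintype.card ι * ((Fintype.card W : ℝ) ^ Fintype.card ι / Fintype.card W) := by
  simp only [sub_sq, sum_add_distrib, sum_sub_distrib, ← sum_mul, ← mul_sum, sum_const, card_univ,
    nsmul_eq_mul, sum_hitCount_sq, sum_hitCount, Fintype.card_fun, Nat.cast_pow]
  have : 0 ≤ (Fintype.card ι : ℝ)
      * ((Fintype.card W : ℝ) ^ Fintype.card ι / (Fintype.card W) ^ 2) := by positivity
  linear_combination this

noncomputable def badBlocks (v : W) (ε : ℝ) : Finset (ι → W) :=
  {g | Fintype.card ι * ((Fintype.card W : ℝ)⁻¹ + ε) < hitCount v g}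

theorem card_badBlocks_mul_le (v : W) {ε : ℝ} (hε : 0 ≤ ε) :
    #(badBlocks (ι := ι) v ε) * (ε ^ 2 * Fintype.card ι)
      ≤ (Fintype.card W : ℝ) ^ Fintype.card ι := by
  have hW : (1 : ℝ) ≤ Fintype.card W := by
    have : Nonempty W := ⟨v⟩
    exact_mod_cast Fintype.card_pos
  rcases (Fintype.card ι).eq_zero_or_pos with hι | hι
  · simp [hι]
  have hι' : (0 : ℝ) < Fintype.card ι := by exact_mod_cast hι
  have hchebyshev : #(badBlocks (ι := ι) v ε) * (ε * Fintype.card ι) ^ 2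
      ≤ ∑ g : ι → W, ((hitCount v g : ℝ) - Fintype.card ι / Fintype.card W) ^ 2 := by
    calc _ ≤ ∑ g ∈ badBlocks v ε, ((hitCount v g : ℝ) - Fintype.card ι / Fintype.card W) ^ 2 := by
          rw [← nsmul_eq_mul]
          refine card_nsmul_le_sum _ _ _ fun g hg => ?_
          simp only [badBlocks, mem_filter] at hg
          exact pow_le_pow_left₀ (by positivity) (by rw [div_eq_mul_inv]; linarith) 2
      _ ≤ _ := sum_le_sum_of_subset_of_nonneg (subset_univ _) fun _ _ _ => sq_nonneg _
  have hN : (Fintype.card W : ℝ) ^ Fintype.card ι / Fintype.card W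
      ≤ (Fintype.card W : ℝ) ^ Fintype.card ι := div_le_self (by positivity) hW
  have := (hchebyshev.trans (sum_hitCount_sub_sq_le v)).trans
    (mul_le_mul_of_nonneg_left hN hι'.le)
  nlinarith

theorem card_badBlocks_mul_div_le (v : W) {C δ : ℝ} (hδ : 0 < δ)
    (hC : C ≤ δ ^ 3 * Fintype.card ι) :
    #(badBlocks (ι := ι) v δ) * (C / Fintype.card W ^ Fintype.card ι) ≤ δ := by
  have hW : (0 : ℝ) < Fintype.card W ^ Fintype.card ι := by
    have : Nonempty W := ⟨v⟩
    positivity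
  rw [mul_div_assoc', div_le_iff₀ hW]
  calc #(badBlocks (ι := ι) v δ) * C ≤ #(badBlocks (ι := ι) v δ) * (δ ^ 3 * Fintype.card ι) :=
        mul_le_mul_of_nonneg_left hC (Nat.cast_nonneg _)
    _ = δ * (#(badBlocks (ι := ι) v δ) * (δ ^ 2 * Fintype.card ι)) := by ring
    _ ≤ δ * Fintype.card W ^ Fintype.card ι :=
        mul_le_mul_of_nonneg_left (card_badBlocks_mul_le v hδ.le) hδ.le

end Binomial

section Windows

variable {ι W : Type*} [Fintype ι] [DecidableEq W]

theorem card_mul_count_le (y : ℕ → W) (d : ι → ℕ) (v : W) (n : ℕ) :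
    Fintype.card ι * Nat.count (fun j => y j = v) n
      ≤ ∑ j ∈ range n, hitCount v (fun s => y (j + d s)) + ∑ s, d s := by
  have hswap : ∑ j ∈ range n, hitCount v (fun s => y (j + d s))
      = ∑ s, Nat.count (fun j => y (j + d s) = v) n := by
    simp only [hitCount, card_filter, Nat.count_eq_card_filter_range]
    exact sum_comm
  rw [hswap, ← sum_add_distrib, ← smul_eq_mul, ← Finset.card_univ, ← sum_const]
  exact sum_le_sum fun s _ => count_le_count_shift_add _ (d s) n

variable [Fintype W]

theorem count_le_add_sum_badBlocks [Nonempty ι] [DecidableEq ι] (y : ℕ → W) (d : ι → ℕ)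
    (v : W) {ε : ℝ} (hε : 0 ≤ ε) (n : ℕ) :
    (Nat.count (fun j => y j = v) n : ℝ)
      ≤ ((Fintype.card W : ℝ)⁻¹ + ε) * n
        + ∑ g ∈ badBlocks v ε, (Nat.count (fun j => (fun s => y (j + d s)) = g) n : ℝ)
        + (∑ s, d s : ℕ) / Fintype.card ι := by
  set Y : ℕ → ι → W := fun j s => y (j + d s)
  set c : (ι → W) → ℝ := fun g => Nat.count (fun j => Y j = g) n
  have hι : (0 : ℝ) < Fintype.card ι := by exact_mod_cast Fintype.card_pos
  have htotal : ∑ g, c g = n := by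
    simpa [c] using (sum_range_comp_eq_sum_count_smul Y (fun _ => (1 : ℝ)) n).symm
  have hwindow : Fintype.card ι * (Nat.count (fun j => y j = v) n : ℝ)
      ≤ ∑ g, c g * hitCount v g + (∑ s, d s : ℕ) := by
    have hsum := sum_range_comp_eq_sum_count_smul Y (fun g => (hitCount v g : ℝ)) n
    simp only [nsmul_eq_mul] at hsum
    rw [← hsum]
    exact_mod_cast card_mul_count_le y d v n
  have hhit : ∀ g, c g * hitCount v g
      ≤ Fintype.card ι * ((Fintype.card W : ℝ)⁻¹ + ε) * c g
        + if g ∈ badBlocks v ε then Fintype.card ι * c g else 0 := by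
    intro g
    have hc : 0 ≤ c g := Nat.cast_nonneg _
    split_ifs with hg
    · have : (hitCount v g : ℝ) ≤ Fintype.card ι := by exact_mod_cast card_filter_le _ _
      nlinarith [mul_nonneg hι.le (add_nonneg (inv_nonneg.2 (Nat.cast_nonneg (Fintype.card W))) hε)]
    · simp only [badBlocks, mem_filter, mem_univ, true_and, not_lt] at hg
      nlinarith
  have := hwindow.trans (add_le_add_left (sum_le_sum fun g _ => hhit g) _)
  rw [sum_add_distrib, sum_ite_mem, univ_inter, ← mul_sum, ← mul_sum, htotal] at this
  refine le_of_mul_le_mul_left ?_ hι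
  have hD : (Fintype.card ι : ℝ) * ((∑ s, d s : ℕ) / Fintype.card ι) = (∑ s, d s : ℕ) :=
    mul_div_cancel₀ _ hι.ne'
  linarith

theorem eventually_count_le_of_block_bound (y : ℕ → W) (d : ℕ → ℕ) {C : ℝ}
    (hblock : ∀ (m : ℕ) (g : Fin m → W), ∀ᶠ n in atTop,
      (Nat.count (fun j => (fun s : Fin m => y (j + d s)) = g) n : ℝ)
        ≤ C / Fintype.card W ^ m * n)
    (v : W) {ε : ℝ} (hε : 0 < ε) :
    ∀ᶠ n in atTop, (Nat.count (fun j => y j = v) n : ℝ) ≤ ((Fintype.card W : ℝ)⁻¹ + ε) * n := by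
  set δ := ε / 3 with hδ_def
  have hδ : 0 < δ := by positivity
  -- windows of `m + 1` blocks, with `m` large enough that the bad windows weigh at most `δ`
  obtain ⟨m, hm⟩ := exists_nat_gt (C / δ ^ 3)
  set bad := badBlocks (ι := Fin (m + 1)) v δ
  have hbad : #bad * (C / Fintype.card W ^ (m + 1)) ≤ δ := by
    simpa using card_badBlocks_mul_div_le (ι := Fin (m + 1)) v hδ (by
      rw [div_lt_iff₀ (by positivity)] at hm
      rw [Fintype.card_fin]
      push_cast
      nlinarith [pow_pos hδ 3])
  set D : ℝ := (∑ s : Fin (m + 1), d s : ℕ) / Fintype.card (Fin (m + 1))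
  filter_upwards [(eventually_all_finset bad).2 fun g _ => hblock (m + 1) g,
    tendsto_natCast_atTop_atTop.eventually_ge_atTop (D / δ)] with n hblock_n hn
  have hsum : ∑ g ∈ bad, (Nat.count (fun j => (fun s : Fin (m + 1) => y (j + d s)) = g) n : ℝ)
      ≤ #bad * (C / Fintype.card W ^ (m + 1)) * n := by
    rw [mul_assoc, ← nsmul_eq_mul]
    exact sum_le_card_nsmul _ _ _ hblock_n
  have hD : D ≤ δ * n := by rwa [div_le_iff₀' hδ] at hn
  have hmain : (Nat.count (fun j => y j = v) n : ℝ) ≤ ((Fintype.card W : ℝ)⁻¹ + δ) * n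
      + ∑ g ∈ bad, (Nat.count (fun j => (fun s : Fin (m + 1) => y (j + d s)) = g) n : ℝ) + D :=
    count_le_add_sum_badBlocks y (fun s : Fin (m + 1) => d s) v hδ.le n
  have : #bad * (C / Fintype.card W ^ (m + 1)) * n ≤ δ * n := by gcongr
  have hε3 : ε * n = 3 * (δ * n) := by rw [hδ_def]; ring
  linarith

theorem tendsto_count_div_of_block_bound (y : ℕ → W) (d : ℕ → ℕ) {C : ℝ}
    (hblock : ∀ (m : ℕ) (g : Fin m → W), ∀ᶠ n in atTop,
      (Nat.count (fun j => (fun s : Fin m => y (j + d s)) = g) n : ℝ)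
        ≤ C / Fintype.card W ^ m * n)
    (v : W) :
    Tendsto (fun n => (Nat.count (fun j => y j = v) n : ℝ) / n) atTop
      (𝓝 (Fintype.card W : ℝ)⁻¹) := by
  have hW : (Fintype.card W : ℝ) ≠ 0 := by
    have : Nonempty W := ⟨v⟩
    positivity
  refine tendsto_of_eventually_le_of_sum_eq (p := fun _ => (Fintype.card W : ℝ)⁻¹)
    (f := fun v n => (Nat.count (fun j => y j = v) n : ℝ) / n) ?_ (fun v ε hε => ?_) v
  · filter_upwards [eventually_gt_atTop 0] with n hn
    have htotal := sum_range_comp_eq_sum_count_smul y (fun _ => (1 : ℝ)) n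
    simp only [sum_const, card_range, nsmul_eq_mul, mul_one] at htotal
    rw [← sum_div, ← htotal, div_self (by positivity), sum_const, card_univ, nsmul_eq_mul,
      mul_inv_cancel₀ hW]
  · filter_upwards [eventually_count_le_of_block_bound y d hblock v hε,
      eventually_gt_atTop 0] with n hle hn
    rwa [div_le_iff₀ (by positivity)]

end Windows

section Words

variable {A : Type*}

def block (x : ℕ → A) (i L : ℕ) : Fin L → A := fun j => x (i + j)

theorem block_length_ofFn_eq_get_iff (x : ℕ → A) (i : ℕ) {L : ℕ} (u : Fin L → A) :
    block x i (List.ofFn u).length = (List.ofFn u).get ↔ block x i L = u := by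
  simp [funext_iff, block, Fin.forall_iff]

theorem block_mul_eq_iff (x : ℕ → A) (j : ℕ) {m k : ℕ} (g : Fin m → Fin k → A) :
    block x j (m * k) = Function.uncurry g ∘ finProdFinEquiv.symm
      ↔ (fun s : Fin m => block x (j + k * s) k) = g := by
  rw [← Equiv.comp_symm_eq, funext_iff, funext_iff, Prod.forall]
  simp [block, funext_iff, finProdFinEquiv, add_comm, add_left_comm]

theorem take_drop_pref (x : ℕ → A) (w : List A) {i n : ℕ} (h : i + w.length ≤ n) :
    ((pref x n).drop i).take w.length = List.ofFn (block x i w.length) := by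
  apply List.ext_getElem
  · simp only [pref, List.length_take, List.length_drop, List.length_map, List.length_range,
      List.length_ofFn]
    omega
  · intro j _ _
    simp [pref, block]

theorem ofFn_eq_iff_eq_get {w : List A} (f : Fin w.length → A) :
    List.ofFn f = w ↔ f = w.get := by
  rw [← List.ofFn_inj, List.ofFn_get]

variable [DecidableEq A]

theorem occ_pref_eq_count (x : ℕ → A) (w : List A) (n : ℕ) :
    occ (pref x n) w = Nat.count (fun i => block x i w.length = w.get) (n + 1 - w.length) := by
  rw [Nat.count_eq_card_filter_range, occ, ← Set.ncard_coe_finset]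
  congr 1
  ext i
  have hlen : (pref x n).length = n := by simp [pref]
  simp only [Set.mem_ofPred_eq, coe_filter, mem_range, hlen]
  constructor
  · rintro ⟨h, hw⟩
    rw [take_drop_pref x w h, ofFn_eq_iff_eq_get] at hw
    exact ⟨by omega, hw⟩
  · rintro ⟨h, hw⟩
    have h' : i + w.length ≤ n := by omega
    rw [take_drop_pref x w h', hw, List.ofFn_get]
    exact ⟨h', rfl⟩

theorem ncard_eq_count_block (x : ℕ → A) (w : List A) (n : ℕ) :
    {i | i < n ∧ ∀ j : Fin w.length, x (i + j) = w.get j}.ncard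
      = Nat.count (fun i => block x i w.length = w.get) n := by
  rw [Nat.count_eq_card_filter_range, ← Set.ncard_coe_finset]
  congr 1
  ext i
  simp [block, funext_iff]

variable [Fintype A]

theorem eventually_count_block_le {x : ℕ → A} {c : ℝ} (hc : 0 < c)
    (hx : ∀ w : List A,
      limsup (fun n : ℕ =>
          ({i : ℕ | i < n ∧ ∀ j : Fin w.length, x (i + j) = w.get j}.ncard : ℝ) / n) atTop
        ≤ c * ((Fintype.card A : ℝ) ^ w.length)⁻¹)
    {L : ℕ} (u : Fin L → A) :
    ∀ᶠ n in atTop, (Nat.count (fun i => block x i L = u) n : ℝ)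
      ≤ 2 * c / Fintype.card A ^ L * n := by
  have hA : (0 : ℝ) < Fintype.card A := by
    have : Nonempty A := ⟨x 0⟩
    exact_mod_cast Fintype.card_pos
  have hu := hx (List.ofFn u)
  simp only [ncard_eq_count_block, block_length_ofFn_eq_get_iff, List.length_ofFn] at hu
  refine eventually_count_le_mul_of_limsup_le _ hu ?_
  rw [← div_eq_mul_inv]
  gcongr
  linarith

theorem tendsto_count_block_div (x : ℕ → A) {C : ℝ}
    (hx : ∀ (L : ℕ) (u : Fin L → A), ∀ᶠ n in atTop,
      (Nat.count (fun i => block x i L = u) n : ℝ) ≤ C / Fintype.card A ^ L * n)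
    (k : ℕ) (v : Fin k → A) :
    Tendsto (fun n => (Nat.count (fun i => block x i k = v) n : ℝ) / n) atTop
      (𝓝 ((Fintype.card A : ℝ) ^ k)⁻¹) := by
  have hblock : ∀ (m : ℕ) (g : Fin m → Fin k → A), ∀ᶠ n in atTop,
      (Nat.count (fun j => (fun s : Fin m => block x (j + k * s) k) = g) n : ℝ)
        ≤ C / Fintype.card (Fin k → A) ^ m * n := by
    intro m g
    simp_rw [← block_mul_eq_iff]
    rw [Fintype.card_fun, Fintype.card_fin, Nat.cast_pow, ← pow_mul, mul_comm k m]
    exact hx (m * k) _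
  simpa [Fintype.card_fun] using
    tendsto_count_div_of_block_bound (fun j => block x j k) (k * ·) hblock v

end Words

end PyatetskiiShapiro

open PyatetskiiShapiro in
/-- Pyatetskii-Shapiro criterion, limsup form: if there is a constant
`c > 0` such that for every word `w`,
`limsup_n #{0 ≤ i ≤ n-1 : T^i x ∈ C_w} / n ≤ c (#A)^{-|w|}`, then `x` is normal. -/
theorem pyatetskiiShapiro {A : Type*} [Fintype A] (x : ℕ → A)
    (h : ∃ c : ℝ, 0 < c ∧ ∀ w : List A,
      Filter.limsup
        (fun n : ℕ =>
          (({i : ℕ | i < n ∧ ∀ j : Fin w.length, x (i + (j : ℕ)) = w.get j}).ncard : ℝ)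
            / n)
        atTop ≤ c * ((Fintype.card A : ℝ) ^ w.length)⁻¹) :
    IsNormal x := by
  classical
  obtain ⟨c, hc, hx⟩ := h
  intro w
  simp_rw [occ_pref_eq_count]
  exact tendsto_count_tsub_div _ _ <| tendsto_count_block_div x
    (fun _ u => eventually_count_block_le hc hx u) w.length w.get
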